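/- arXiv:math/9910137 — 6 statements merged into one kernel-verified Lean document; each statement's English description precedes it below -/
import Mathlib

section
/- If two families of ℂ-bilinear maps (C_j)_{j∈ℕ} and (C̃_j)_{j∈ℕ} are both asymptotic expansions for T, and T satisfies the norm-limit property, then C_j(f,g) = C̃_j(f,g) for all j ∈ ℕ and all f, g ∈ A. (Uniqueness part of the construction of the Berezin–Toeplitz star product.) -/
open Filter Finset MeasureTheory

variable {X : Type*} [TopologicalSpace X] [CompactSpace X]
variable {H : ℕ → Type*} [∀ m, NormedAddCommGroup (H m)]
  [∀ m, InnerProductSpace ℂ (H m)] [∀ m, CompleteSpace (H m)]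

/-- `T` satisfies the norm-limit property if `‖T^(m)(f)‖ → ‖f‖_∞` for every `f ∈ C(X, ℂ)`. -/
def NormLimitProperty (T : ∀ m : ℕ, C(X, ℂ) →ₗ[ℂ] (H m →L[ℂ] H m)) : Prop :=
  ∀ f : C(X, ℂ), Tendsto (fun m : ℕ => ‖T m f‖) atTop (nhds ‖f‖)

/-- A family of ℂ-bilinear maps `C_j` is an asymptotic expansion for `T` if for all
`f, g` and every `N` there is `K ≥ 0` with
`‖T^(m)(f)·T^(m)(g) − ∑_{j<N} m^{−j} T^(m)(C_j(f,g))‖ ≤ K·m^{−N}` for all `m ≥ 1`. -/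
def IsAsymptoticExpansion (T : ∀ m : ℕ, C(X, ℂ) →ₗ[ℂ] (H m →L[ℂ] H m))
    (C : ℕ → C(X, ℂ) →ₗ[ℂ] C(X, ℂ) →ₗ[ℂ] C(X, ℂ)) : Prop :=
  ∀ (f g : C(X, ℂ)) (N : ℕ), ∃ K : ℝ, 0 ≤ K ∧ ∀ m : ℕ, 1 ≤ m →
    ‖T m f * T m g - ∑ j ∈ Finset.range N, ((m : ℂ)⁻¹) ^ j • T m (C j f g)‖
      ≤ K * ((m : ℝ)⁻¹) ^ N

/-
Subtracting the two expansions to order `j + 1` and assuming `C i = C' i` for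
`i < j`, only the `j`-th terms survive, so `m^{-j} ‖T^(m)(C_j(f,g) − C'_j(f,g))‖ = O(m^{-j-1})`.
Hence `‖T^(m)(C_j(f,g) − C'_j(f,g))‖ = O(1/m)`, and the norm-limit property forces
`‖C_j(f,g) − C'_j(f,g)‖_∞ = 0`; conclude by strong induction on `j`.
-/

theorem sum_range_succ_pow_smul_sub_eq_of_eq_of_lt {R M : Type*} [Ring R] [AddCommGroup M]
    [Module R M] (r : R) {a b : ℕ → M} {j : ℕ} (h : ∀ i < j, a i = b i) :
    ∑ i ∈ range (j + 1), r ^ i • a i - ∑ i ∈ range (j + 1), r ^ i • b i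
      = r ^ j • (a j - b j) := by
  rw [← sum_sub_distrib, sum_range_succ, sum_eq_zero, zero_add, smul_sub]
  intro i hi
  rw [h i (mem_range.mp hi), sub_self]

omit [∀ m, CompleteSpace (H m)] in
theorem NormLimitProperty.eq_zero_of_norm_le {T : ∀ m : ℕ, C(X, ℂ) →ₗ[ℂ] (H m →L[ℂ] H m)}
    (hT : NormLimitProperty T) {f : C(X, ℂ)} {K : ℝ}
    (hf : ∀ m : ℕ, 1 ≤ m → ‖T m f‖ ≤ K / m) : f = 0 := by
  have hle : ‖f‖ ≤ 0 :=
    le_of_tendsto_of_tendsto (hT f) (tendsto_const_div_atTop_nhds_zero_nat K)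
      (eventually_atTop.mpr ⟨1, hf⟩)
  exact norm_le_zero_iff.mp hle

namespace IsAsymptoticExpansion

variable {T : ∀ m : ℕ, C(X, ℂ) →ₗ[ℂ] (H m →L[ℂ] H m)}
  {C C' : ℕ → C(X, ℂ) →ₗ[ℂ] C(X, ℂ) →ₗ[ℂ] C(X, ℂ)}

omit [CompactSpace X] [∀ m, CompleteSpace (H m)] in
theorem exists_norm_sum_sub_sum_le (hC : IsAsymptoticExpansion T C)
    (hC' : IsAsymptoticExpansion T C') (f g : C(X, ℂ)) (N : ℕ) :
    ∃ K : ℝ, ∀ m : ℕ, 1 ≤ m →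
      ‖∑ j ∈ range N, ((m : ℂ)⁻¹) ^ j • T m (C j f g)
        - ∑ j ∈ range N, ((m : ℂ)⁻¹) ^ j • T m (C' j f g)‖ ≤ K * ((m : ℝ)⁻¹) ^ N := by
  obtain ⟨K, -, hK⟩ := hC f g N
  obtain ⟨K', -, hK'⟩ := hC' f g N
  refine ⟨K + K', fun m hm => ?_⟩
  have htriangle := norm_sub_le_of_le (hK' m hm) (hK m hm)
  rw [sub_sub_sub_cancel_left] at htriangle
  linarith

omit [CompactSpace X] [∀ m, CompleteSpace (H m)] in
theorem exists_norm_map_sub_le_of_eq_of_lt (hC : IsAsymptoticExpansion T C)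
    (hC' : IsAsymptoticExpansion T C') {j : ℕ} {f g : C(X, ℂ)}
    (h : ∀ i < j, C i f g = C' i f g) :
    ∃ K : ℝ, ∀ m : ℕ, 1 ≤ m → ‖T m (C j f g - C' j f g)‖ ≤ K / m := by
  obtain ⟨K, hK⟩ := exists_norm_sum_sub_sum_le hC hC' f g (j + 1)
  refine ⟨K, fun m hm => ?_⟩
  have hlead := hK m hm
  rw [sum_range_succ_pow_smul_sub_eq_of_eq_of_lt _ fun i hi => by rw [h i hi], ← map_sub,
    norm_smul, norm_pow, norm_inv, Complex.norm_natCast, pow_succ, mul_comm K,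
    mul_assoc] at hlead
  rw [div_eq_inv_mul]
  exact le_of_mul_le_mul_left hlead (by positivity)

end IsAsymptoticExpansion

theorem asymptoticExpansion_unique
    (T : ∀ m : ℕ, C(X, ℂ) →ₗ[ℂ] (H m →L[ℂ] H m))
    (hT : NormLimitProperty T)
    (C C' : ℕ → C(X, ℂ) →ₗ[ℂ] C(X, ℂ) →ₗ[ℂ] C(X, ℂ))
    (hC : IsAsymptoticExpansion T C) (hC' : IsAsymptoticExpansion T C') :
    ∀ (j : ℕ) (f g : C(X, ℂ)), C j f g = C' j f g := by
  intro j
  induction j using Nat.strong_induction_on with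
  | _ j ih =>
    intro f g
    obtain ⟨K, hK⟩ := hC.exists_norm_map_sub_le_of_eq_of_lt hC' fun i hi => ih i hi f g
    exact sub_eq_zero.mp (hT.eq_zero_of_norm_le hK)
end

section
/- Suppose T satisfies the norm-limit property and (C_j) is an asymptotic expansion for T. If in addition, for given f, g ∈ A, there is a constant K' ≥ 0 with ‖T^(m)(f)·T^(m)(g) − T^(m)(f·g)‖ ≤ K'/m for all m ≥ 1, then the zeroth coefficient is the pointwise product: C_0(f,g) = f·g. -/
/-! Both `T^(m)(f) T^(m)(g) - T^(m)(f g)` and `T^(m)(f) T^(m)(g) - T^(m)(C_0(f,g))` are `O(1/m)`,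
so by linearity and the triangle inequality `‖T^(m)(C_0(f,g) - f g)‖ = O(1/m) → 0`. By the
norm-limit property this limit is also `‖C_0(f,g) - f g‖_∞`, which therefore vanishes. -/

open Filter Finset MeasureTheory

variable {X : Type*} [TopologicalSpace X] [CompactSpace X]
variable {H : ℕ → Type*} [∀ m, NormedAddCommGroup (H m)]
  [∀ m, InnerProductSpace ℂ (H m)] [∀ m, CompleteSpace (H m)]

omit [∀ m, CompleteSpace (H m)] in
theorem NormLimitProperty.eq_zero_of_norm_le_div {T : ∀ m : ℕ, C(X, ℂ) →ₗ[ℂ] (H m →L[ℂ] H m)}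
    (hT : NormLimitProperty T) {a : C(X, ℂ)} {K : ℝ} (ha : ∀ m : ℕ, 1 ≤ m → ‖T m a‖ ≤ K / m) :
    a = 0 := by
  have hzero : Tendsto (fun m : ℕ => ‖T m a‖) atTop (nhds 0) := by
    refine squeeze_zero' (Eventually.of_forall fun m => norm_nonneg _) ?_
      (tendsto_const_div_atTop_nhds_zero_nat K)
    filter_upwards [eventually_ge_atTop 1] with m hm using ha m hm
  exact norm_eq_zero.mp (tendsto_nhds_unique (hT a) hzero)

omit [CompactSpace X] [∀ m, CompleteSpace (H m)] in
theorem IsAsymptoticExpansion.norm_mul_sub_coeff_zero_le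
    {T : ∀ m : ℕ, C(X, ℂ) →ₗ[ℂ] (H m →L[ℂ] H m)} {C : ℕ → C(X, ℂ) →ₗ[ℂ] C(X, ℂ) →ₗ[ℂ] C(X, ℂ)}
    (hC : IsAsymptoticExpansion T C) (f g : C(X, ℂ)) :
    ∃ K : ℝ, ∀ m : ℕ, 1 ≤ m → ‖T m f * T m g - T m (C 0 f g)‖ ≤ K / m := by
  obtain ⟨K, -, hK⟩ := hC f g 1
  refine ⟨K, fun m hm => ?_⟩
  simpa [div_eq_mul_inv] using hK m hm

theorem asymptoticExpansion_coeff_zero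
    (T : ∀ m : ℕ, C(X, ℂ) →ₗ[ℂ] (H m →L[ℂ] H m))
    (hT : NormLimitProperty T)
    (C : ℕ → C(X, ℂ) →ₗ[ℂ] C(X, ℂ) →ₗ[ℂ] C(X, ℂ))
    (hC : IsAsymptoticExpansion T C)
    (f g : C(X, ℂ))
    (hfg : ∃ K' : ℝ, 0 ≤ K' ∧ ∀ m : ℕ, 1 ≤ m →
      ‖T m f * T m g - T m (f * g)‖ ≤ K' / (m : ℝ)) :
    C 0 f g = f * g := by
  obtain ⟨K, hK⟩ := hC.norm_mul_sub_coeff_zero_le f g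
  obtain ⟨K', -, hK'⟩ := hfg
  refine sub_eq_zero.mp (hT.eq_zero_of_norm_le_div (K := K + K') fun m hm => ?_)
  calc ‖T m (C 0 f g - f * g)‖
      = ‖T m (C 0 f g) - T m f * T m g + (T m f * T m g - T m (f * g))‖ := by
        rw [map_sub, sub_add_sub_cancel]
    _ ≤ ‖T m f * T m g - T m (C 0 f g)‖ + ‖T m f * T m g - T m (f * g)‖ := by
        rw [norm_sub_rev (T m f * T m g)]
        exact norm_add_le _ _
    _ ≤ (K + K') / m := by
        rw [add_div]
        exact add_le_add (hK m hm) (hK' m hm)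
end

section
/- Suppose T satisfies the norm-limit property and (C_j) is an asymptotic expansion for T. Let f, g, h ∈ A and suppose that ‖m·i·(T^(m)(f)·T^(m)(g) − T^(m)(g)·T^(m)(f)) − T^(m)(h)‖ → 0 as m → ∞. Then h = i·(C_1(f,g) − C_1(g,f)). (In the paper, h = {f,g} is the Poisson bracket, so this is the derivation of the star-product condition C_1(f,g) − C_1(g,f) = −i{f,g} from the commutator asymptotics of the Berezin–Toeplitz operators.) -/
open Filter Finset MeasureTheory

variable {X : Type*} [TopologicalSpace X] [CompactSpace X]
variable {H : ℕ → Type*} [∀ m, NormedAddCommGroup (H m)]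
  [∀ m, InnerProductSpace ℂ (H m)] [∀ m, CompleteSpace (H m)]

/-!
The expansion to order two gives `T f T g = T C₀(f,g) + m⁻¹ T C₁(f,g) + O(m⁻²)`, so
`m i [T f, T g] = m T(i Δ₀) + T(i Δ₁) + O(m⁻¹)` with `Δⱼ = Cⱼ(f,g) − Cⱼ(g,f)`. Comparing with
the hypothesis, `‖m T(i Δ₀) + T(i Δ₁ − h)‖ → 0`. Since `‖T u‖ → ‖u‖` for every `u`, the
bounded term `T(i Δ₁ − h)` forces first `‖T(i Δ₀)‖ = O(m⁻¹)`, hence `Δ₀ = 0`, and then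
`‖T(i Δ₁ − h)‖ → 0`, hence `h = i Δ₁`.
-/

section

variable {Y : Type*} [TopologicalSpace Y] {E : ℕ → Type*} [∀ m, NormedAddCommGroup (E m)]
  [∀ m, InnerProductSpace ℂ (E m)]

namespace NormLimitProperty

variable [CompactSpace Y] {T : ∀ m : ℕ, C(Y, ℂ) →ₗ[ℂ] (E m →L[ℂ] E m)}

theorem eq_zero_of_tendsto_norm (hT : NormLimitProperty T) {u : C(Y, ℂ)}
    (hu : Tendsto (fun m : ℕ => ‖T m u‖) atTop (nhds 0)) : u = 0 :=
  norm_eq_zero.mp (tendsto_nhds_unique (hT u) hu)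

theorem eq_zero_of_tendsto_norm_smul_add (hT : NormLimitProperty T) {u v : C(Y, ℂ)}
    (huv : Tendsto (fun m : ℕ => ‖(m : ℂ) • T m u + T m v‖) atTop (nhds 0)) :
    u = 0 ∧ v = 0 := by
  have hu : u = 0 := by
    have hbound : ∀ᶠ m : ℕ in atTop,
        ‖T m u‖ ≤ (‖(m : ℂ) • T m u + T m v‖ + ‖T m v‖) * (m : ℝ)⁻¹ := by
      filter_upwards [eventually_ge_atTop 1] with m hm
      have hm₀ : (0 : ℝ) < m := by exact_mod_cast hm
      calc ‖T m u‖ = ‖(m : ℂ) • T m u‖ * (m : ℝ)⁻¹ := by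
            rw [norm_smul, Complex.norm_natCast]; field_simp
        _ ≤ (‖(m : ℂ) • T m u + T m v‖ + ‖T m v‖) * (m : ℝ)⁻¹ := by
            gcongr; exact norm_le_add_norm_add _ _
    refine hT.eq_zero_of_tendsto_norm (squeeze_zero' (.of_forall fun _ => norm_nonneg _) hbound ?_)
    simpa using (huv.add (hT v)).mul (tendsto_inv_atTop_nhds_zero_nat (𝕜 := ℝ))
  refine ⟨hu, hT.eq_zero_of_tendsto_norm ?_⟩
  simpa [hu] using huv

end NormLimitProperty

namespace IsAsymptoticExpansion

variable {T : ∀ m : ℕ, C(Y, ℂ) →ₗ[ℂ] (E m →L[ℂ] E m)}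
  {C : ℕ → C(Y, ℂ) →ₗ[ℂ] C(Y, ℂ) →ₗ[ℂ] C(Y, ℂ)}

theorem tendsto_firstOrder_remainder (hC : IsAsymptoticExpansion T C) (f g : C(Y, ℂ)) :
    Tendsto (fun m : ℕ => ‖(m : ℂ) • (T m f * T m g - T m (C 0 f g)) - T m (C 1 f g)‖)
      atTop (nhds 0) := by
  obtain ⟨K, -, hK⟩ := hC f g 2
  refine squeeze_zero' (Eventually.of_forall fun _ => norm_nonneg _) ?_
    (by simpa using (tendsto_inv_atTop_nhds_zero_nat (𝕜 := ℝ)).const_mul K)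
  filter_upwards [eventually_ge_atTop 1] with m hm
  have hm₀ : (0 : ℝ) < m := by exact_mod_cast hm
  have hm₀' : (m : ℂ) ≠ 0 := by exact_mod_cast hm₀.ne'
  calc ‖(m : ℂ) • (T m f * T m g - T m (C 0 f g)) - T m (C 1 f g)‖
      = m * ‖T m f * T m g - ∑ j ∈ range 2, ((m : ℂ)⁻¹) ^ j • T m (C j f g)‖ := by
        rw [← Complex.norm_natCast, ← norm_smul]
        congr 1
        simp only [sum_range_succ, sum_range_zero, pow_zero, pow_one, one_smul, zero_add,
          smul_sub, smul_add, smul_smul, mul_inv_cancel₀ hm₀']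
        abel
    _ ≤ m * (K * ((m : ℝ)⁻¹) ^ 2) := by gcongr; exact hK m hm
    _ = K * (m : ℝ)⁻¹ := by field_simp

end IsAsymptoticExpansion

end

theorem asymptoticExpansion_coeff_one_antisym
    (T : ∀ m : ℕ, C(X, ℂ) →ₗ[ℂ] (H m →L[ℂ] H m))
    (hT : NormLimitProperty T)
    (C : ℕ → C(X, ℂ) →ₗ[ℂ] C(X, ℂ) →ₗ[ℂ] C(X, ℂ))
    (hC : IsAsymptoticExpansion T C)
    (f g h : C(X, ℂ))
    (hcomm : Tendsto
      (fun m : ℕ =>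
        ‖((m : ℂ) * Complex.I) • (T m f * T m g - T m g * T m f) - T m h‖)
      atTop (nhds 0)) :
    h = Complex.I • (C 1 f g - C 1 g f) := by
  set Δ₀ := C 0 f g - C 0 g f
  set Δ₁ := C 1 f g - C 1 g f
  have hdecomp : ∀ m : ℕ, (m : ℂ) • T m (Complex.I • Δ₀) + T m (Complex.I • Δ₁ - h) =
      (((m : ℂ) * Complex.I) • (T m f * T m g - T m g * T m f) - T m h)
        - Complex.I • ((m : ℂ) • (T m f * T m g - T m (C 0 f g)) - T m (C 1 f g))
        + Complex.I • ((m : ℂ) • (T m g * T m f - T m (C 0 g f)) - T m (C 1 g f)) := fun m => by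
    simp only [Δ₀, Δ₁, map_sub, map_smul]
    module
  have hlim : Tendsto (fun m : ℕ => ‖(m : ℂ) • T m (Complex.I • Δ₀) + T m (Complex.I • Δ₁ - h)‖)
      atTop (nhds 0) := by
    have hsum := (hcomm.add (hC.tendsto_firstOrder_remainder f g)).add
      (hC.tendsto_firstOrder_remainder g f)
    refine squeeze_zero (fun _ => norm_nonneg _) (fun m => ?_) (by simpa using hsum)
    rw [hdecomp]
    refine (norm_add_le _ _).trans (add_le_add ((norm_sub_le _ _).trans ?_) ?_) <;>
      simp only [norm_smul, Complex.norm_I, one_mul, le_refl]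
  exact (sub_eq_zero.mp (hT.eq_zero_of_tendsto_norm_smul_add hlim).2).symm
end

section
/- Suppose T satisfies the norm-limit property and (C_j) is an asymptotic expansion for T. If moreover T^(m)(1) = id_{H_m} for every m ≥ 1, where 1 denotes the constant function 1, then for every g ∈ A: C_0(1,g) = C_0(g,1) = g, and C_j(1,g) = C_j(g,1) = 0 for all j ≥ 1. Equivalently, the constant function 1 is a two-sided unit for the induced formal product: 1 ⋆ g = g ⋆ 1 = g (the star product is 'null on constants'). -/
open Filter Finset MeasureTheory

variable {X : Type*} [TopologicalSpace X] [CompactSpace X]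
variable {H : ℕ → Type*} [∀ m, NormedAddCommGroup (H m)]
  [∀ m, InnerProductSpace ℂ (H m)] [∀ m, CompleteSpace (H m)]

lemma zero_of_norm_le_aux (T : ∀ m : ℕ, C(X, ℂ) →ₗ[ℂ] (H m →L[ℂ] H m))
    (hT : NormLimitProperty T) (h : C(X, ℂ)) (K : ℝ)
    (hK : ∀ m : ℕ, 1 ≤ m → ‖T m h‖ ≤ K * (m : ℝ)⁻¹) : h = 0 := by
  have h0 : Tendsto (fun m : ℕ => ‖T m h‖) atTop (nhds 0) := by
    apply squeeze_zero' (Eventually.of_forall fun m => norm_nonneg _)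
      (eventually_atTop.2 ⟨1, hK⟩)
    simpa using tendsto_inv_atTop_nhds_zero_nat.const_mul K
  have := tendsto_nhds_unique (hT h) h0
  simpa [norm_eq_zero] using this

lemma key_aux (T : ∀ m : ℕ, C(X, ℂ) →ₗ[ℂ] (H m →L[ℂ] H m))
    (hT : NormLimitProperty T) (g : C(X, ℂ)) (D : ℕ → C(X, ℂ))
    (hexp : ∀ N : ℕ, ∃ K : ℝ, 0 ≤ K ∧ ∀ m : ℕ, 1 ≤ m →
      ‖T m g - ∑ j ∈ Finset.range N, ((m : ℂ)⁻¹) ^ j • T m (D j)‖ ≤ K * ((m : ℝ)⁻¹) ^ N) :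
    ∀ N : ℕ, D N = if N = 0 then g else 0 := by
  intro N
  induction N using Nat.strong_induction_on with
  | _ N ih =>
  obtain ⟨K, hK0, hK⟩ := hexp (N + 1)
  rcases Nat.eq_zero_or_pos N with rfl | hN
  · simp only [if_pos rfl]
    have h0 : g - D 0 = 0 := by
      apply zero_of_norm_le_aux T hT (g - D 0) K
      intro m hm
      have := hK m hm
      simpa [map_sub] using this
    have := sub_eq_zero.mp h0
    exact this.symm
  · rw [if_neg (Nat.pos_iff_ne_zero.mp hN)]
    have hsum : ∀ m : ℕ, 1 ≤ m →
        ∑ j ∈ Finset.range N, ((m : ℂ)⁻¹) ^ j • T m (D j) = T m g := by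
      intro m hm
      rw [Finset.sum_eq_single_of_mem 0 (Finset.mem_range.2 hN)]
      · have : D 0 = g := by simpa using ih 0 hN
        simp [this]
      · intro j hj hj0
        have : D j = 0 := by simpa [hj0] using ih j (Finset.mem_range.mp hj)
        simp [this]
    apply zero_of_norm_le_aux T hT (D N) K
    intro m hm
    have h1 := hK m hm
    rw [Finset.sum_range_succ, hsum m hm] at h1
    have h2 : ‖((m : ℂ)⁻¹) ^ N • T m (D N)‖ ≤ K * ((m : ℝ)⁻¹) ^ (N + 1) := by
      simpa [sub_add_eq_sub_sub, sub_self, zero_sub, norm_neg] using h1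
    have hm' : (0 : ℝ) < (m : ℝ) := by exact_mod_cast hm
    have hpos : (0 : ℝ) < ((m : ℝ)⁻¹) ^ N := by positivity
    rw [norm_smul, norm_pow, norm_inv, Complex.norm_natCast] at h2
    rw [pow_succ] at h2
    nlinarith [h2, hpos]

theorem starProduct_null_on_constants
    (T : ∀ m : ℕ, C(X, ℂ) →ₗ[ℂ] (H m →L[ℂ] H m))
    (hT : NormLimitProperty T)
    (C : ℕ → C(X, ℂ) →ₗ[ℂ] C(X, ℂ) →ₗ[ℂ] C(X, ℂ))
    (hC : IsAsymptoticExpansion T C)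
    (hone : ∀ m : ℕ, 1 ≤ m → T m 1 = 1) :
    ∀ g : C(X, ℂ),
      C 0 1 g = g ∧ C 0 g 1 = g ∧
      ∀ j : ℕ, 1 ≤ j → C j 1 g = 0 ∧ C j g 1 = 0 := by
  intro g
  have hleft : ∀ N : ℕ, C N 1 g = if N = 0 then g else 0 := by
    apply key_aux T hT g
    intro N
    obtain ⟨K, hK0, hK⟩ := hC 1 g N
    refine ⟨K, hK0, fun m hm => ?_⟩
    have := hK m hm
    rwa [hone m hm, one_mul] at this
  have hright : ∀ N : ℕ, C N g 1 = if N = 0 then g else 0 := by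
    apply key_aux T hT g
    intro N
    obtain ⟨K, hK0, hK⟩ := hC g 1 N
    refine ⟨K, hK0, fun m hm => ?_⟩
    have := hK m hm
    rwa [hone m hm, mul_one] at this
  refine ⟨by simpa using hleft 0, by simpa using hright 0, fun j hj => ?_⟩
  have hj' : j ≠ 0 := Nat.pos_iff_ne_zero.mp hj
  exact ⟨by simpa [hj'] using hleft j, by simpa [hj'] using hright j⟩
end

section
/- Suppose T satisfies the norm-limit property, (C_j) is an asymptotic expansion for T, and T is compatible with conjugation in the sense that T^(m)(f̄) = (T^(m)(f))* (Hilbert-space adjoint) for all f ∈ A and all m ≥ 1. Then the coefficients satisfy the parity condition: for all j ∈ ℕ and all f, g ∈ A, the pointwise complex conjugate of C_j(f,g) equals C_j(ḡ, f̄). -/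
open Filter Finset MeasureTheory

variable {X : Type*} [TopologicalSpace X] [CompactSpace X]
variable {H : ℕ → Type*} [∀ m, NormedAddCommGroup (H m)]
  [∀ m, InnerProductSpace ℂ (H m)] [∀ m, CompleteSpace (H m)]

/- STATEMENT 12: Suppose T satisfies the norm-limit property, (C_j) is an asymptotic
expansion for T, and T is compatible with conjugation: T^(m)(f̄) = (T^(m)(f))* for all
f and all m ≥ 1.  Then the coefficients satisfy the parity condition: for all j and all
f, g, the pointwise complex conjugate of C_j(f,g) equals C_j(ḡ, f̄). -/

theorem starProduct_parity
    (T : ∀ m : ℕ, C(X, ℂ) →ₗ[ℂ] (H m →L[ℂ] H m))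
    (hT : NormLimitProperty T)
    (C : ℕ → C(X, ℂ) →ₗ[ℂ] C(X, ℂ) →ₗ[ℂ] C(X, ℂ))
    (hC : IsAsymptoticExpansion T C)
    (hadj : ∀ (m : ℕ), 1 ≤ m → ∀ f : C(X, ℂ),
      T m (star f) = ContinuousLinearMap.adjoint (T m f)) :
    ∀ (j : ℕ) (f g : C(X, ℂ)), star (C j f g) = C j (star g) (star f) := by
  intro j f g
  have hstarT : ∀ m : ℕ, 1 ≤ m → ∀ a : C(X, ℂ), star (T m a) = T m (star a) := by
    intro m hm a
    rw [hadj m hm a, ContinuousLinearMap.star_eq_adjoint]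
  set D : ℕ → C(X, ℂ) := fun i => C i f g - star (C i (star g) (star f)) with hD
  suffices h : ∀ i, D i = 0 by
    have := h j
    rw [hD, sub_eq_zero] at this
    rw [this, star_star]
  have key : ∀ N : ℕ, ∃ K : ℝ, 0 ≤ K ∧ ∀ m : ℕ, 1 ≤ m →
      ‖∑ i ∈ Finset.range N, ((m : ℂ)⁻¹) ^ i • T m (D i)‖ ≤ K * ((m : ℝ)⁻¹) ^ N := by
    intro N
    obtain ⟨K1, hK1, h1⟩ := hC f g N
    obtain ⟨K2, hK2, h2⟩ := hC (star g) (star f) N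
    refine ⟨K1 + K2, by positivity, ?_⟩
    intro m hm
    have hc : ∀ i : ℕ, star (((m : ℂ)⁻¹) ^ i) = ((m : ℂ)⁻¹) ^ i := by
      intro i; simp
    have e : ∑ i ∈ Finset.range N, ((m : ℂ)⁻¹) ^ i • T m (D i)
        = star (T m (star g) * T m (star f)
            - ∑ i ∈ Finset.range N, ((m : ℂ)⁻¹) ^ i • T m (C i (star g) (star f)))
          - (T m f * T m g - ∑ i ∈ Finset.range N, ((m : ℂ)⁻¹) ^ i • T m (C i f g)) := by
      rw [star_sub, star_mul, hstarT m hm, hstarT m hm, star_star, star_star, star_sum]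
      have hterm : ∀ i ∈ Finset.range N,
          star (((m : ℂ)⁻¹) ^ i • T m (C i (star g) (star f)))
            = ((m : ℂ)⁻¹) ^ i • T m (star (C i (star g) (star f))) := by
        intro i _
        rw [star_smul, hstarT m hm, hc i]
      rw [Finset.sum_congr rfl hterm]
      simp only [hD, map_sub, smul_sub, Finset.sum_sub_distrib]
      abel
    rw [e]
    calc ‖_ - _‖ ≤ ‖star (T m (star g) * T m (star f)
            - ∑ i ∈ Finset.range N, ((m : ℂ)⁻¹) ^ i • T m (C i (star g) (star f)))‖
          + ‖T m f * T m g - ∑ i ∈ Finset.range N, ((m : ℂ)⁻¹) ^ i • T m (C i f g)‖ :=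
        norm_sub_le _ _
      _ ≤ K2 * ((m : ℝ)⁻¹) ^ N + K1 * ((m : ℝ)⁻¹) ^ N := by
          rw [norm_star]
          exact add_le_add (h2 m hm) (h1 m hm)
      _ = (K1 + K2) * ((m : ℝ)⁻¹) ^ N := by ring
  intro i
  induction i using Nat.strong_induction_on with
  | _ j ih =>
    obtain ⟨K, hK, hb⟩ := key (j + 1)
    have hbound : ∀ m : ℕ, 1 ≤ m → ‖T m (D j)‖ ≤ K * (m : ℝ)⁻¹ := by
      intro m hm
      have hsum : ∑ i ∈ Finset.range (j + 1), ((m : ℂ)⁻¹) ^ i • T m (D i)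
          = ((m : ℂ)⁻¹) ^ j • T m (D j) := by
        rw [Finset.sum_range_succ, Finset.sum_eq_zero, zero_add]
        intro i hi
        rw [ih i (Finset.mem_range.mp hi), map_zero, smul_zero]
      have := hb m hm
      rw [hsum, norm_smul] at this
      have hmpos : (0 : ℝ) < (m : ℝ) := by exact_mod_cast Nat.lt_of_lt_of_le Nat.zero_lt_one hm
      have hnorm : ‖((m : ℂ)⁻¹) ^ j‖ = ((m : ℝ)⁻¹) ^ j := by
        simp [norm_pow]
      rw [hnorm] at this
      have hppos : (0 : ℝ) < ((m : ℝ)⁻¹) ^ j := by positivity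
      have : ((m : ℝ)⁻¹) ^ j * ‖T m (D j)‖ ≤ (K * (m : ℝ)⁻¹) * ((m : ℝ)⁻¹) ^ j := by
        calc ((m : ℝ)⁻¹) ^ j * ‖T m (D j)‖ ≤ K * ((m : ℝ)⁻¹) ^ (j + 1) := this
          _ = (K * (m : ℝ)⁻¹) * ((m : ℝ)⁻¹) ^ j := by ring
      exact le_of_mul_le_mul_right (by linarith [this]) hppos
    have h0 : Tendsto (fun m : ℕ => ‖T m (D j)‖) atTop (nhds 0) := by
      have htend : Tendsto (fun m : ℕ => K * (m : ℝ)⁻¹) atTop (nhds 0) := by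
        simpa using tendsto_inv_atTop_nhds_zero_nat.const_mul K
      refine squeeze_zero' ?_ ?_ htend
      · filter_upwards [eventually_ge_atTop 1] with m _
        exact norm_nonneg _
      · filter_upwards [eventually_ge_atTop 1] with m hm
        exact hbound m hm
    have := tendsto_nhds_unique (hT (D j)) h0
    exact norm_eq_zero.mp this
end

section
/- Suppose T satisfies the norm-limit property and (C_j) is an asymptotic expansion for T. Then the coefficients satisfy the associativity identities: for every k ∈ ℕ and all f, g, h ∈ A, ∑_{l=0}^{k} C_l(f, C_{k−l}(g,h)) = ∑_{l=0}^{k} C_l(C_{k−l}(f,g), h). Consequently the induced ℂ[[ν]]-bilinear product f ⋆ g = ∑_{j≥0} C_j(f,g) ν^j on A[[ν]] is associative. -/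
/-!
Composition of operators is associative, so `T_f T_g T_h` can be expanded in powers of `1/m`
either as `T_f (T_g T_h)` or as `(T_f T_g) T_h`: substituting one expansion into the other gives
`∑_{k<N} m^{-k} T(a_k)` and `∑_{k<N} m^{-k} T(b_k)` up to `O(m^{-N})`, where `a_k` and `b_k` are
the two sides of the `k`-th associativity identity. If `a_j = b_j` for `j < k`, comparing the two
expansions at order `k + 1` leaves `‖T^(m)(a_k - b_k)‖ = O(1/m)`, and the norm-limit property
forces `‖a_k - b_k‖_∞ = 0`. Associativity of `⋆` is then a reindexing of sums over antidiagonals.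
-/

open Filter Finset MeasureTheory

variable {X : Type*} [TopologicalSpace X] [CompactSpace X]
variable {H : ℕ → Type*} [∀ m, NormedAddCommGroup (H m)]
  [∀ m, InnerProductSpace ℂ (H m)] [∀ m, CompleteSpace (H m)]

/-- The formal star product on `C(X,ℂ)[[ν]] ≅ (ℕ → C(X,ℂ))` induced by the `C_j`. -/
noncomputable def starProd (C : ℕ → C(X, ℂ) →ₗ[ℂ] C(X, ℂ) →ₗ[ℂ] C(X, ℂ))
    (F G : ℕ → C(X, ℂ)) : ℕ → C(X, ℂ) :=
  fun k => ∑ p ∈ Finset.HasAntidiagonal.antidiagonal k, ∑ q ∈ Finset.HasAntidiagonal.antidiagonal p.2,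
    C p.1 (F q.1) (G q.2)

section Antidiagonal
variable {A M : Type*} [AddCommMonoid M]

theorem Finset.sum_antidiagonal_antidiagonal_assoc [AddMonoid A] [HasAntidiagonal A] (n : A)
    (f : A → A → A → M) :
    ∑ p ∈ antidiagonal n, ∑ q ∈ antidiagonal p.2, f p.1 q.1 q.2
      = ∑ p ∈ antidiagonal n, ∑ q ∈ antidiagonal p.1, f q.1 q.2 p.2 := by
  simp only [sum_sigma']
  apply sum_nbij' (fun x ↦ ⟨(x.1.1 + x.2.1, x.2.2), (x.1.1, x.2.1)⟩)
    (fun x ↦ ⟨(x.2.1, x.2.2 + x.1.2), (x.2.2, x.1.2)⟩) <;>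
    aesop (add simp [add_assoc])

theorem Finset.sum_antidiagonal_antidiagonal_left_comm [AddCommMonoid A] [HasAntidiagonal A]
    (n : A) (f : A → A → A → M) :
    ∑ p ∈ antidiagonal n, ∑ q ∈ antidiagonal p.2, f p.1 q.1 q.2
      = ∑ p ∈ antidiagonal n, ∑ q ∈ antidiagonal p.2, f q.1 p.1 q.2 := by
  simp only [sum_sigma']
  apply sum_nbij' (fun x ↦ ⟨(x.2.1, x.1.1 + x.2.2), (x.1.1, x.2.2)⟩)
    (fun x ↦ ⟨(x.2.1, x.1.1 + x.2.2), (x.1.1, x.2.2)⟩) <;>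
    aesop (add simp [add_left_comm])

end Antidiagonal

section StarProduct
variable {Y : Type*} [TopologicalSpace Y]
variable (C : ℕ → C(Y, ℂ) →ₗ[ℂ] C(Y, ℂ) →ₗ[ℂ] C(Y, ℂ)) (F G K : ℕ → C(Y, ℂ))

theorem starProd_right_nested_apply (k : ℕ) :
    starProd C F (starProd C G K) k
      = ∑ p ∈ antidiagonal k, ∑ q ∈ antidiagonal p.2, ∑ r ∈ antidiagonal q.2,
          ∑ s ∈ antidiagonal p.1, C s.1 (F q.1) (C s.2 (G r.1) (K r.2)) := by
  simp only [starProd, map_sum]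
  rw [sum_congr rfl fun p _ => sum_antidiagonal_antidiagonal_left_comm p.2
      fun i d t => ∑ s ∈ antidiagonal t, C p.1 (F i) (C d (G s.1) (K s.2)),
    sum_antidiagonal_antidiagonal_assoc k
      fun c d v => ∑ r ∈ antidiagonal v, ∑ s ∈ antidiagonal r.2, C c (F r.1) (C d (G s.1) (K s.2))]
  refine sum_congr rfl fun p _ => ?_
  rw [sum_comm]
  exact sum_congr rfl fun q _ => sum_comm

theorem starProd_left_nested_apply (k : ℕ) :
    starProd C (starProd C F G) K k
      = ∑ p ∈ antidiagonal k, ∑ q ∈ antidiagonal p.2, ∑ r ∈ antidiagonal q.1,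
          ∑ s ∈ antidiagonal p.1, C s.1 (C s.2 (F r.1) (G r.2)) (K q.2) := by
  simp only [starProd, map_sum, LinearMap.sum_apply]
  rw [sum_congr rfl fun p _ => (sum_antidiagonal_antidiagonal_assoc p.2
      fun d t b => ∑ s ∈ antidiagonal t, C p.1 (C d (F s.1) (G s.2)) (K b)).symm,
    sum_antidiagonal_antidiagonal_assoc k
      fun c d u => ∑ q ∈ antidiagonal u, ∑ s ∈ antidiagonal q.1, C c (C d (F s.1) (G s.2)) (K q.2)]
  refine sum_congr rfl fun p _ => ?_
  rw [sum_comm]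
  exact sum_congr rfl fun q _ => sum_comm

theorem starProd_assoc
    (hC : ∀ n f g h, ∑ q ∈ antidiagonal n, C q.1 f (C q.2 g h)
      = ∑ q ∈ antidiagonal n, C q.1 (C q.2 f g) h) :
    starProd C F (starProd C G K) = starProd C (starProd C F G) K := by
  funext k
  rw [starProd_right_nested_apply, starProd_left_nested_apply]
  refine sum_congr rfl fun p _ => ?_
  simp_rw [hC]
  exact sum_antidiagonal_antidiagonal_assoc p.2
    fun i a b => ∑ s ∈ antidiagonal p.1, C s.1 (C s.2 (F i) (G a)) (K b)

end StarProduct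

section InvPowBounds
variable {𝕜 : Type*} [RCLike 𝕜] {E : ℕ → Type*}

def IsBigOInvPow [∀ m, SeminormedAddCommGroup (E m)] (x : ∀ m, E m) (N : ℕ) : Prop :=
  ∃ K : ℝ, 0 ≤ K ∧ ∀ m : ℕ, 1 ≤ m → ‖x m‖ ≤ K * ((m : ℝ)⁻¹) ^ N

namespace IsBigOInvPow

section AddGroup
variable [∀ m, SeminormedAddCommGroup (E m)] {x y : ∀ m, E m} {M N : ℕ}

theorem mono (hx : IsBigOInvPow x N) (hMN : M ≤ N) : IsBigOInvPow x M := by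
  obtain ⟨K, hK0, hK⟩ := hx
  refine ⟨K, hK0, fun m hm => (hK m hm).trans ?_⟩
  have hm' : (1 : ℝ) ≤ m := by exact_mod_cast hm
  exact mul_le_mul_of_nonneg_left
    (pow_le_pow_of_le_one (by positivity) (inv_le_one_of_one_le₀ hm') hMN) hK0

theorem zero : IsBigOInvPow (0 : ∀ m, E m) N :=
  ⟨0, le_rfl, fun m _ => by simp⟩

theorem add (hx : IsBigOInvPow x N) (hy : IsBigOInvPow y N) :
    IsBigOInvPow (fun m => x m + y m) N := by
  obtain ⟨K, hK0, hK⟩ := hx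
  obtain ⟨L, hL0, hL⟩ := hy
  refine ⟨K + L, add_nonneg hK0 hL0, fun m hm => ?_⟩
  calc ‖x m + y m‖ ≤ ‖x m‖ + ‖y m‖ := norm_add_le _ _
    _ ≤ K * ((m : ℝ)⁻¹) ^ N + L * ((m : ℝ)⁻¹) ^ N := add_le_add (hK m hm) (hL m hm)
    _ = (K + L) * ((m : ℝ)⁻¹) ^ N := by ring

theorem neg (hx : IsBigOInvPow x N) : IsBigOInvPow (fun m => -x m) N := by
  simpa only [IsBigOInvPow, norm_neg] using hx

theorem sub (hx : IsBigOInvPow x N) (hy : IsBigOInvPow y N) :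
    IsBigOInvPow (fun m => x m - y m) N := by
  simpa only [sub_eq_add_neg] using hx.add hy.neg

theorem sum {ι : Type*} (s : Finset ι) {x : ι → ∀ m, E m} (hx : ∀ i ∈ s, IsBigOInvPow (x i) N) :
    IsBigOInvPow (fun m => ∑ i ∈ s, x i m) N := by
  simpa only [← Finset.sum_apply] using
    sum_induction x (IsBigOInvPow · N) (fun _ _ => add) zero hx

theorem of_tendsto_norm {a : ℝ} (hx : Tendsto (fun m => ‖x m‖) atTop (nhds a)) :
    IsBigOInvPow x 0 := by
  obtain ⟨K, hK⟩ := hx.bddAbove_range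
  exact ⟨max K 0, le_max_right _ _,
    fun m _ => by simpa using le_max_of_le_left (hK (Set.mem_range_self m))⟩

theorem tendsto_norm_zero (hx : IsBigOInvPow x 1) : Tendsto (fun m => ‖x m‖) atTop (nhds 0) := by
  obtain ⟨K, -, hK⟩ := hx
  have hlim : Tendsto (fun m : ℕ => K * (m : ℝ)⁻¹) atTop (nhds 0) := by
    simpa using (tendsto_inv_atTop_nhds_zero_nat (𝕜 := ℝ)).const_mul K
  refine squeeze_zero' (Eventually.of_forall fun m => norm_nonneg _) ?_ hlim
  filter_upwards [eventually_ge_atTop 1] with m hm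
  simpa using hK m hm

end AddGroup

theorem mul [∀ m, NonUnitalSeminormedRing (E m)] {x y : ∀ m, E m} {M N : ℕ}
    (hx : IsBigOInvPow x M) (hy : IsBigOInvPow y N) :
    IsBigOInvPow (fun m => x m * y m) (M + N) := by
  obtain ⟨K, hK0, hK⟩ := hx
  obtain ⟨L, hL0, hL⟩ := hy
  refine ⟨K * L, mul_nonneg hK0 hL0, fun m hm => ?_⟩
  calc ‖x m * y m‖ ≤ ‖x m‖ * ‖y m‖ := norm_mul_le _ _
    _ ≤ (K * ((m : ℝ)⁻¹) ^ M) * (L * ((m : ℝ)⁻¹) ^ N) :=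
        mul_le_mul (hK m hm) (hL m hm) (norm_nonneg _) (by positivity)
    _ = K * L * ((m : ℝ)⁻¹) ^ (M + N) := by ring

theorem invPow_smul [∀ m, SeminormedAddCommGroup (E m)] [∀ m, NormedSpace 𝕜 (E m)]
    {x : ∀ m, E m} {N : ℕ} (j : ℕ) (hx : IsBigOInvPow x N) :
    IsBigOInvPow (fun m => ((m : 𝕜)⁻¹) ^ j • x m) (j + N) := by
  obtain ⟨K, hK0, hK⟩ := hx
  refine ⟨K, hK0, fun m hm => ?_⟩
  rw [norm_smul, norm_pow, norm_inv, RCLike.norm_natCast, pow_add]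
  calc ((m : ℝ)⁻¹) ^ j * ‖x m‖ ≤ ((m : ℝ)⁻¹) ^ j * (K * ((m : ℝ)⁻¹) ^ N) := by
        gcongr; exact hK m hm
    _ = K * (((m : ℝ)⁻¹) ^ j * ((m : ℝ)⁻¹) ^ N) := by ring

theorem of_invPow_smul [∀ m, SeminormedAddCommGroup (E m)] [∀ m, NormedSpace 𝕜 (E m)]
    {x : ∀ m, E m} {N j : ℕ} (hx : IsBigOInvPow (fun m => ((m : 𝕜)⁻¹) ^ j • x m) (j + N)) :
    IsBigOInvPow x N := by
  obtain ⟨K, hK0, hK⟩ := hx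
  refine ⟨K, hK0, fun m hm => ?_⟩
  have hm_pos : (0 : ℝ) < m := by exact_mod_cast hm
  have hpos : 0 < ((m : ℝ)⁻¹) ^ j := by positivity
  have hxm := hK m hm
  rw [norm_smul, norm_pow, norm_inv, RCLike.norm_natCast, pow_add] at hxm
  refine le_of_mul_le_mul_left ?_ hpos
  calc ((m : ℝ)⁻¹) ^ j * ‖x m‖ ≤ K * (((m : ℝ)⁻¹) ^ j * ((m : ℝ)⁻¹) ^ N) := hxm
    _ = ((m : ℝ)⁻¹) ^ j * (K * ((m : ℝ)⁻¹) ^ N) := by ring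

end IsBigOInvPow

end InvPowBounds

section Expansion
variable (𝕜 : Type*) [RCLike 𝕜] {E : ℕ → Type*}

def HasInvPowExpansion [∀ m, SeminormedAddCommGroup (E m)] [∀ m, NormedSpace 𝕜 (E m)]
    (x : ∀ m, E m) (y : ℕ → ∀ m, E m) (N : ℕ) : Prop :=
  IsBigOInvPow (fun m => x m - ∑ j ∈ range N, ((m : 𝕜)⁻¹) ^ j • y j m) N

variable {𝕜}

namespace HasInvPowExpansion

section AddGroup
variable [∀ m, SeminormedAddCommGroup (E m)] [∀ m, NormedSpace 𝕜 (E m)]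

theorem bind {x : ∀ m, E m} {y : ℕ → ∀ m, E m} {z : ℕ → ℕ → ∀ m, E m} {N : ℕ}
    (hx : HasInvPowExpansion 𝕜 x y N) (hy : ∀ j, HasInvPowExpansion 𝕜 (y j) (z j) (N - j)) :
    HasInvPowExpansion 𝕜 x (fun k m => ∑ l ∈ range (k + 1), z (k - l) l m) N := by
  have hflip : ∀ m : ℕ, ∑ k ∈ range N, ((m : 𝕜)⁻¹) ^ k • ∑ l ∈ range (k + 1), z (k - l) l m
      = ∑ j ∈ range N, ∑ i ∈ range (N - j), ((m : 𝕜)⁻¹) ^ j • ((m : 𝕜)⁻¹) ^ i • z j i m := by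
    intro m
    rw [← sum_range_diag_flip]
    refine sum_congr rfl fun k _ => ?_
    rw [smul_sum, ← sum_range_reflect]
    refine sum_congr rfl fun l hl => ?_
    have hlk : l < k + 1 := mem_range.mp hl
    rw [smul_smul, ← pow_add, show k + 1 - 1 - l = k - l by omega, show k - (k - l) = l by omega,
      show l + (k - l) = k by omega]
  have hsplit : ∀ m : ℕ,
      x m - ∑ k ∈ range N, ((m : 𝕜)⁻¹) ^ k • ∑ l ∈ range (k + 1), z (k - l) l m
        = (x m - ∑ j ∈ range N, ((m : 𝕜)⁻¹) ^ j • y j m)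
          + ∑ j ∈ range N, ((m : 𝕜)⁻¹) ^ j •
              (y j m - ∑ i ∈ range (N - j), ((m : 𝕜)⁻¹) ^ i • z j i m) := by
    intro m
    rw [hflip]
    simp only [smul_sub, smul_sum, sum_sub_distrib]
    abel
  unfold HasInvPowExpansion
  simp only [hsplit]
  exact hx.add <| IsBigOInvPow.sum _ fun j _ => ((hy j).invPow_smul j).mono (by omega)

theorem unique {A : Type*} [NormedAddCommGroup A] [Module 𝕜 A] (T : ∀ m, A →ₗ[𝕜] E m)
    (hT : ∀ a, Tendsto (fun m => ‖T m a‖) atTop (nhds ‖a‖)) {x : ∀ m, E m} {a b : ℕ → A}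
    (ha : ∀ N, HasInvPowExpansion 𝕜 x (fun k m => T m (a k)) N)
    (hb : ∀ N, HasInvPowExpansion 𝕜 x (fun k m => T m (b k)) N) : a = b := by
  suffices h : ∀ k, a k - b k = 0 from funext fun k => sub_eq_zero.mp (h k)
  intro k
  induction k using Nat.strong_induction_on with
  | _ k ih =>
  have hdiff : IsBigOInvPow
      (fun m => ∑ j ∈ range (k + 1), ((m : 𝕜)⁻¹) ^ j • T m (a j - b j)) (k + 1) := by
    have := (hb (k + 1)).sub (ha (k + 1))
    simpa only [sub_sub_sub_cancel_left, ← sum_sub_distrib, ← smul_sub, ← map_sub] using this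
  have hk : IsBigOInvPow (fun m => T m (a k - b k)) 1 := by
    refine IsBigOInvPow.of_invPow_smul (𝕜 := 𝕜) (j := k) ?_
    have hlow : ∀ m : ℕ, ∑ j ∈ range k, ((m : 𝕜)⁻¹) ^ j • T m (a j - b j) = 0 := fun m =>
      sum_eq_zero fun j hj => by rw [ih j (mem_range.mp hj), map_zero, smul_zero]
    simpa only [sum_range_succ, hlow, zero_add] using hdiff
  exact norm_eq_zero.mp (tendsto_nhds_unique (hT _) hk.tendsto_norm_zero)

end AddGroup

section Algebra
variable [∀ m, SeminormedRing (E m)] [∀ m, NormedAlgebra 𝕜 (E m)]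
  {a x : ∀ m, E m} {y : ℕ → ∀ m, E m} {N : ℕ}

theorem mul_left (ha : IsBigOInvPow a 0) (hx : HasInvPowExpansion 𝕜 x y N) :
    HasInvPowExpansion 𝕜 (fun m => a m * x m) (fun j m => a m * y j m) N := by
  have := ha.mul hx
  rw [zero_add] at this
  simpa only [HasInvPowExpansion, mul_sub, mul_sum, mul_smul_comm] using this

theorem mul_right (ha : IsBigOInvPow a 0) (hx : HasInvPowExpansion 𝕜 x y N) :
    HasInvPowExpansion 𝕜 (fun m => x m * a m) (fun j m => y j m * a m) N := by
  have := hx.mul ha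
  rw [add_zero] at this
  simpa only [HasInvPowExpansion, sub_mul, sum_mul, smul_mul_assoc] using this

end Algebra

end HasInvPowExpansion

end Expansion

theorem IsAsymptoticExpansion.sum_range_assoc {T : ∀ m : ℕ, C(X, ℂ) →ₗ[ℂ] (H m →L[ℂ] H m)}
    {C : ℕ → C(X, ℂ) →ₗ[ℂ] C(X, ℂ) →ₗ[ℂ] C(X, ℂ)} (hC : IsAsymptoticExpansion T C)
    (hT : NormLimitProperty T) (k : ℕ) (f g h : C(X, ℂ)) :
    ∑ l ∈ range (k + 1), C l f (C (k - l) g h) = ∑ l ∈ range (k + 1), C l (C (k - l) f g) h := by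
  have hbdd : ∀ a, IsBigOInvPow (fun m => T m a) 0 := fun a => .of_tendsto_norm (hT a)
  -- this is `IsAsymptoticExpansion T C` unfolded
  have hexp : ∀ f g N,
      HasInvPowExpansion ℂ (fun m => T m f * T m g) (fun j m => T m (C j f g)) N := hC
  have hright : ∀ N, HasInvPowExpansion ℂ (fun m => T m f * T m g * T m h)
      (fun k m => T m (∑ l ∈ range (k + 1), C l f (C (k - l) g h))) N := fun N => by
    simpa only [mul_assoc, map_sum] using
      ((hexp g h N).mul_left (hbdd f)).bind fun j => hexp f (C j g h) (N - j)
  have hleft : ∀ N, HasInvPowExpansion ℂ (fun m => T m f * T m g * T m h)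
      (fun k m => T m (∑ l ∈ range (k + 1), C l (C (k - l) f g) h)) N := fun N => by
    simpa only [map_sum] using
      ((hexp f g N).mul_right (hbdd h)).bind fun j => hexp (C j f g) h (N - j)
  exact congrFun (HasInvPowExpansion.unique T hT hright hleft) k

theorem starProduct_associative
    (T : ∀ m : ℕ, C(X, ℂ) →ₗ[ℂ] (H m →L[ℂ] H m))
    (hT : NormLimitProperty T)
    (C : ℕ → C(X, ℂ) →ₗ[ℂ] C(X, ℂ) →ₗ[ℂ] C(X, ℂ))
    (hC : IsAsymptoticExpansion T C) :
    (∀ (k : ℕ) (f g h : C(X, ℂ)),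
      ∑ l ∈ Finset.range (k + 1), C l f (C (k - l) g h)
        = ∑ l ∈ Finset.range (k + 1), C l (C (k - l) f g) h) ∧
    (∀ F G K : ℕ → C(X, ℂ),
      starProd C F (starProd C G K) = starProd C (starProd C F G) K) := by
  refine ⟨hC.sum_range_assoc hT, fun F G K => starProd_assoc C F G K fun n f g h => ?_⟩
  simpa only [Nat.sum_antidiagonal_eq_sum_range_succ_mk] using hC.sum_range_assoc hT n f g h
end
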